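/- In the cyclic tournament on n = 2k+1 players where each player beats the next k players cyclically, all players have exactly k wins, and for every player i, if player i−1 throws their match to i then player i becomes the unique player with k+1 wins (a strict Copeland winner). -/

import Mathlib

abbrev Tournament (n : ℕ) := Fin n → Fin n → Bool

def IsTournament {n : ℕ} (T : Tournament n) : Prop :=
  (∀ i, T i i = false) ∧ ∀ i j : Fin n, i ≠ j → T i j = !T j i

def CondorcetWinner {n : ℕ} (T : Tournament n) (i : Fin n) : Prop :=
  ∀ j, j ≠ i → T i j = true

def PairAdjacent {n : ℕ} (i j : Fin n) (T T' : Tournament n) : Prop :=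
  ∀ a b : Fin n, ¬((a = i ∧ b = j) ∨ (a = j ∧ b = i)) → T a b = T' a b

def SAdjacent {n : ℕ} (S : Finset (Fin n)) (T T' : Tournament n) : Prop :=
  ∀ a b : Fin n, (a ∉ S ∨ b ∉ S) → T a b = T' a b

def IsRule {n : ℕ} (r : Tournament n → Fin n → ℝ) : Prop :=
  ∀ T, IsTournament T → (∀ i, 0 ≤ r T i) ∧ (∑ i, r T i) = 1

def CondorcetConsistent {n : ℕ} (r : Tournament n → Fin n → ℝ) : Prop :=
  ∀ T, IsTournament T → ∀ i, CondorcetWinner T i → r T i = 1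

def SNM2 {n : ℕ} (r : Tournament n → Fin n → ℝ) (α : ℝ) : Prop :=
  ∀ T T' : Tournament n, IsTournament T → IsTournament T' →
    ∀ i j : Fin n, i ≠ j → PairAdjacent i j T T' →
      r T' i + r T' j - r T i - r T j ≤ α

def SNMk {n : ℕ} (k : ℕ) (r : Tournament n → Fin n → ℝ) (α : ℝ) : Prop :=
  ∀ S : Finset (Fin n), S.card ≤ k → ∀ T T' : Tournament n,
    IsTournament T → IsTournament T' → SAdjacent S T T' →
      (∑ i ∈ S, r T' i) - (∑ i ∈ S, r T i) ≤ α

def flipTo {n : ℕ} (i j : Fin n) (T : Tournament n) : Tournament n :=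
  fun a b => if a = i ∧ b = j then true else if a = j ∧ b = i then false else T a b

def winCount {n : ℕ} (T : Tournament n) (i : Fin n) : ℕ :=
  (Finset.univ.filter fun j => T i j = true).card

def cyclicT (m w : ℕ) : Tournament m :=
  fun i j => decide (1 ≤ (j.val + m - i.val) % m ∧ (j.val + m - i.val) % m ≤ w)

def skT (n : ℕ) : Tournament n :=
  fun i j =>
    if i.val = n - 1 ∧ j.val = 0 then true
    else if i.val = 0 ∧ j.val = n - 1 then false
    else decide (i.val < j.val)

/-!
Translation `j ↦ j - i` is an automorphism of the cyclic tournament, so every player beats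
exactly the `k` residues `1, …, k` ahead of it; in particular each player `i` loses to its
predecessor `i - 1`. Throwing that match gives `i` one extra win and takes none from anyone
else, so `i` alone reaches `k + 1`.
-/

section flipTo

variable {n : ℕ} (i j : Fin n) (T : Tournament n)

theorem winCount_flipTo_self (h : T i j = false) :
    winCount (flipTo i j T) i = winCount T i + 1 := by
  have hrow : (Finset.univ.filter fun b => flipTo i j T i b = true) =
      insert j (Finset.univ.filter fun b => T i b = true) := by
    ext b
    by_cases hb : b = j
    · simp [flipTo, hb]
    · simp only [flipTo, hb, if_false, Finset.mem_insert, Finset.mem_filter,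
        Finset.mem_univ, true_and, false_or]
      split_ifs with hij
      · exact absurd (hij.1 ▸ hij.2) hb
      · rfl
  rw [winCount, hrow, Finset.card_insert_of_notMem (by simp [h]), winCount]

theorem winCount_flipTo_le_of_ne {a : Fin n} (ha : a ≠ i) :
    winCount (flipTo i j T) a ≤ winCount T a := by
  refine Finset.card_le_card (Finset.monotone_filter_right _ fun b _ hb => ?_)
  simp only [flipTo, ha, false_and, if_false] at hb
  split_ifs at hb
  exact hb

end flipTo

section cyclicT

variable {n w : ℕ}

theorem cyclicT_eq_true_iff (i j : Fin (n + 1)) :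
    cyclicT (n + 1) w i j = true ↔ 1 ≤ (j - i).val ∧ (j - i).val ≤ w := by
  have hval : (j.val + (n + 1) - i.val) % (n + 1) = (j - i).val := by
    rw [Fin.val_sub]; congr 1; omega
  simp [cyclicT, hval]

theorem card_filter_val_mem_Icc (hw : w ≤ n) :
    (Finset.univ.filter fun x : Fin (n + 1) => 1 ≤ x.val ∧ x.val ≤ w).card = w := by
  have hmap : (Finset.univ.filter fun x : Fin (n + 1) => 1 ≤ x.val ∧ x.val ≤ w).map
      Fin.valEmbedding = Finset.Icc 1 w := by
    ext a
    simp only [Finset.mem_map, Finset.mem_filter, Finset.mem_univ, true_and,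
      Fin.valEmbedding_apply, Finset.mem_Icc]
    exact ⟨fun ⟨x, hx, hxa⟩ => hxa ▸ hx, fun ha => ⟨⟨a, by omega⟩, ha, rfl⟩⟩
  simpa using congrArg Finset.card hmap

theorem winCount_cyclicT (hw : w ≤ n) (i : Fin (n + 1)) : winCount (cyclicT (n + 1) w) i = w := by
  refine (Finset.card_nbij' (· - i) (· + i) ?_ ?_ ?_ ?_).trans (card_filter_val_mem_Icc hw) <;>
    intro x <;> simp [cyclicT_eq_true_iff]

theorem cyclicT_self_sub_one (hw : 2 * w ≤ n) (i : Fin (n + 1)) :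
    cyclicT (n + 1) w i (i - 1) = false := by
  rw [Bool.eq_false_iff, Ne, cyclicT_eq_true_iff, sub_sub_cancel_left, Fin.coe_neg_one]
  omega

end cyclicT

theorem stmt_4 (k : ℕ) :
    (∀ i : Fin (2*k + 1), winCount (cyclicT (2*k + 1) k) i = k) ∧
    (∀ i : Fin (2*k + 1),
      winCount (flipTo i (i - 1) (cyclicT (2*k + 1) k)) i = k + 1 ∧
      ∀ j : Fin (2*k + 1), j ≠ i →
        winCount (flipTo i (i - 1) (cyclicT (2*k + 1) k)) j < k + 1) := by
  have hwins := winCount_cyclicT (n := 2 * k) (w := k) (by omega)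
  refine ⟨hwins, fun i => ⟨?_, fun j hj => ?_⟩⟩
  · rw [winCount_flipTo_self _ _ _ (cyclicT_self_sub_one le_rfl i), hwins]
  · exact (winCount_flipTo_le_of_ne _ _ _ hj).trans_lt (by rw [hwins]; omega)
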